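/- For every real β > 1 and every integer k with k ≥ β + 1, the generalized binomial coefficient satisfies |C(β,k)| ≤ (1 + (β·ln((β+1)²/k) + 2)/k)^k. -/

import Mathlib

/-!
Writing `C(β,k) = ∏_{j<k} (β - j)/(j + 1)`, AM-GM bounds `|C(β,k)|` by `(S/k)^k`, where
`S = ∑_{j<k} |β - j|/(j + 1)`. The terms change sign once, at `m = ⌊β + 1⌋`, so
`S = k - 2m + (β + 1)(2 H_m - H_k)` in terms of harmonic numbers, and the logarithmic
bounds `H_m ≤ 1 + ln(β + 1)` and `H_k - H_m ≥ ln((k + 1)/(m + 1))` give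
`S ≤ k + β ln((β + 1)²/k) + 2`.
-/

open Finset Real

/-- The generalized binomial coefficient `C(β,k) = β(β−1)⋯(β−k+1)/k!`. -/
noncomputable def genBinom (β : ℝ) (k : ℕ) : ℝ :=
  (∏ j ∈ Finset.range k, (β - j)) / (k.factorial : ℝ)

lemma genBinom_eq_prod (β : ℝ) (k : ℕ) :
    genBinom β k = ∏ j ∈ range k, (β - j) / (j + 1) := by
  rw [genBinom, prod_div_distrib, ← prod_range_add_one_eq_factorial]
  push_cast
  rfl

lemma prod_le_sum_div_card_pow {ι : Type*} (s : Finset ι) {z : ι → ℝ}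
    (hz : ∀ i ∈ s, 0 ≤ z i) :
    ∏ i ∈ s, z i ≤ ((∑ i ∈ s, z i) / #s) ^ #s := by
  rcases s.eq_empty_or_nonempty with rfl | hs
  · simp
  have hcard : #s ≠ 0 := hs.card_pos.ne'
  have amgm := geom_mean_le_arith_mean s (fun _ ↦ 1) z (fun _ _ ↦ zero_le_one)
    (by simpa using hs.card_pos) hz
  simp only [rpow_one, sum_const, nsmul_eq_mul, mul_one, one_mul] at amgm
  calc ∏ i ∈ s, z i = ((∏ i ∈ s, z i) ^ ((#s : ℝ)⁻¹)) ^ #s :=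
        (rpow_inv_natCast_pow (prod_nonneg hz) hcard).symm
    _ ≤ ((∑ i ∈ s, z i) / #s) ^ #s := by gcongr; exact rpow_nonneg (prod_nonneg hz) _

lemma sum_abs_eq_two_mul_sum_sub_sum {t : ℕ → ℝ} {m k : ℕ} (hmk : m ≤ k)
    (hpos : ∀ j < m, 0 ≤ t j) (hneg : ∀ j, m ≤ j → t j ≤ 0) :
    ∑ j ∈ range k, |t j| = 2 * ∑ j ∈ range m, t j - ∑ j ∈ range k, t j := by
  have hhead : ∑ j ∈ range m, |t j| = ∑ j ∈ range m, t j :=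
    sum_congr rfl fun j hj ↦ abs_of_nonneg (hpos j (mem_range.1 hj))
  have htail : ∑ j ∈ Ico m k, |t j| = -∑ j ∈ Ico m k, t j := by
    rw [← sum_neg_distrib]
    exact sum_congr rfl fun j hj ↦ abs_of_nonpos (hneg j (mem_Ico.1 hj).1)
  rw [← sum_range_add_sum_Ico (fun j ↦ |t j|) hmk, ← sum_range_add_sum_Ico t hmk, hhead, htail]
  ring

lemma sum_range_sub_div_succ (β : ℝ) (n : ℕ) :
    ∑ j ∈ range n, (β - j) / (j + 1) = (β + 1) * harmonic n - n := by
  have hterm : ∀ j : ℕ, (β - j) / (j + 1) = (β + 1) * ((j : ℝ) + 1)⁻¹ - 1 := fun j ↦ by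
    field_simp
    ring
  simp only [hterm, sum_sub_distrib, ← mul_sum, harmonic, sum_const, card_range]
  push_cast
  ring

lemma log_add_one_sub_log_le_inv {x : ℝ} (hx : 0 < x) : log (x + 1) - log x ≤ x⁻¹ := by
  rw [← log_div (by positivity) hx.ne']
  calc log ((x + 1) / x) ≤ (x + 1) / x - 1 := log_le_sub_one_of_pos (by positivity)
    _ = x⁻¹ := by field_simp; ring

lemma log_sub_log_le_harmonic_sub {m n : ℕ} (h : m ≤ n) :
    log (n + 1) - log (m + 1) ≤ harmonic n - harmonic m := by
  induction n, h using Nat.le_induction with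
  | base => simp
  | succ n _ ih =>
    have hstep := log_add_one_sub_log_le_inv (x := (n : ℝ) + 1) (by positivity)
    rw [harmonic_succ]
    push_cast
    linarith

lemma sum_abs_sub_div_succ_eq {β : ℝ} (hβ : -1 ≤ β) {k : ℕ} (hk : ⌊β + 1⌋₊ ≤ k) :
    ∑ j ∈ range k, |(β - j) / (j + 1)|
      = k - 2 * ⌊β + 1⌋₊ + (β + 1) * (harmonic ⌊β + 1⌋₊ - (harmonic k - harmonic ⌊β + 1⌋₊)) := by
  set m := ⌊β + 1⌋₊
  have hm_le : (m : ℝ) ≤ β + 1 := Nat.floor_le (by linarith)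
  have hm_gt : β < m := by linarith [Nat.lt_floor_add_one (β + 1)]
  have hpos (j : ℕ) (hj : j < m) : 0 ≤ (β - j) / (j + 1) := by
    have : (j : ℝ) + 1 ≤ m := by exact_mod_cast hj
    exact div_nonneg (by linarith) (by positivity)
  have hneg (j : ℕ) (hj : m ≤ j) : (β - j) / (j + 1) ≤ 0 := by
    have : (m : ℝ) ≤ j := by exact_mod_cast hj
    exact div_nonpos_of_nonpos_of_nonneg (by linarith) (by positivity)
  rw [sum_abs_eq_two_mul_sum_sub_sum hk hpos hneg, sum_range_sub_div_succ,
    sum_range_sub_div_succ]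
  ring

lemma sum_abs_sub_div_succ_le {β : ℝ} (hβ : 0 ≤ β) {k : ℕ} (hk : β + 1 ≤ k) :
    ∑ j ∈ range k, |(β - j) / (j + 1)| ≤ k + β * log ((β + 1) ^ 2 / k) + 2 := by
  set m := ⌊β + 1⌋₊
  have hm_le : (m : ℝ) ≤ β + 1 := Nat.floor_le (by linarith)
  have hm_gt : β < m := by linarith [Nat.lt_floor_add_one (β + 1)]
  have hmk : m ≤ k := Nat.floor_le_of_le hk
  have hk_pos : (0 : ℝ) < k := by linarith
  have hHm : (harmonic m : ℝ) ≤ 1 + log (β + 1) := harmonic_floor_le_one_add_log _ (by linarith)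
  have hHkm := log_sub_log_le_harmonic_sub hmk
  have hlog_m : log (m + 1) ≤ log (β + 1) + (β + 1)⁻¹ := by
    have := log_add_one_sub_log_le_inv (x := β + 1) (by linarith)
    linarith [log_le_log (by positivity) (by linarith : (m : ℝ) + 1 ≤ β + 1 + 1)]
  have hlog_k : log k ≤ log (k + 1) := log_le_log hk_pos (by linarith)
  have hlog_bk : log (β + 1) ≤ log k := log_le_log (by linarith) hk
  have hlog_b : log (β + 1) ≤ β := by linarith [log_le_sub_one_of_pos (x := β + 1) (by linarith)]
  calc ∑ j ∈ range k, |(β - j) / (j + 1)|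
      = k - 2 * m + (β + 1) * (harmonic m - (harmonic k - harmonic m)) :=
        sum_abs_sub_div_succ_eq (by linarith) hmk
    _ ≤ k - 2 * m + (β + 1) * (1 + 2 * log (β + 1) + (β + 1)⁻¹ - log k) := by
        gcongr (k : ℝ) - 2 * m + (β + 1) * ?_
        linarith
    _ = k - 2 * m + β + 2 + (β + 1) * (2 * log (β + 1) - log k) := by
        field_simp
        ring
    _ ≤ k + β * (2 * log (β + 1) - log k) + 2 := by linarith
    _ = k + β * log ((β + 1) ^ 2 / k) + 2 := by
        rw [log_div (by positivity) hk_pos.ne', log_pow]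
        push_cast
        ring

/-- for `β > 1` and `k ≥ β + 1`,
`|C(β,k)| ≤ (1 + (β·ln((β+1)²/k) + 2)/k)^k`. -/
theorem stmt_5 (β : ℝ) (hβ : 1 < β) (k : ℕ) (hk : β + 1 ≤ (k : ℝ)) :
    |genBinom β k| ≤
      (1 + (β * Real.log ((β + 1) ^ 2 / (k : ℝ)) + 2) / (k : ℝ)) ^ k := by
  have hk_pos : (0 : ℝ) < k := by linarith
  calc |genBinom β k| = ∏ j ∈ range k, |(β - j) / (j + 1)| := by
        rw [genBinom_eq_prod, abs_prod]
    _ ≤ ((∑ j ∈ range k, |(β - j) / (j + 1)|) / k) ^ k := by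
        simpa only [card_range] using
          prod_le_sum_div_card_pow (range k) fun j _ ↦ abs_nonneg ((β - j) / (j + 1))
    _ ≤ ((k + β * log ((β + 1) ^ 2 / k) + 2) / k) ^ k := by
        gcongr
        exact sum_abs_sub_div_succ_le (by linarith) hk
    _ = (1 + (β * Real.log ((β + 1) ^ 2 / (k : ℝ)) + 2) / (k : ℝ)) ^ k := by
        congr 1
        field_simp
        ring
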